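/- Let A and Ȧ be N_S×M complex matrices, σ_S² > 0, α a nonzero complex number, L a positive integer, and Γ_S > 0. Then the set of M×M Hermitian positive semidefinite matrices S satisfying tr(AᴴAS) > 0, tr(ȦᴴȦS)·tr(AᴴAS) − |tr(ȦᴴAS)|² > 0, and CRB(S) ≤ Γ_S is convex, and it coincides with the set of Hermitian PSD matrices S satisfying tr(AᴴAS) > 0 and the linear matrix inequality [[tr(ȦᴴȦS) − 1/Γ_{S,1}, conj(tr(ȦᴴAS))], [tr(ȦᴴAS), tr(AᴴAS)]] ⪰ 0, where Γ_{S,1} = 2|α|²L·Γ_S/σ_S². -/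

import Mathlib

open Matrix ComplexOrder

/-- The estimation Cramér–Rao bound as a function of the transmit covariance `S`
(context formula): `CRB(S) = (σ_S²/(2|α|²L)) · tr(AᴴAS)/(tr(ȦᴴȦS)·tr(AᴴAS) − |tr(ȦᴴAS)|²)`. -/
noncomputable def CRB {NS M : ℕ} (A Ad : Matrix (Fin NS) (Fin M) ℂ) (σS2 : ℝ) (α : ℂ)
    (L : ℕ) (S : Matrix (Fin M) (Fin M) ℂ) : ℝ :=
  σS2 / (2 * ‖α‖ ^ 2 * L) *
    (((Aᴴ * A * S).trace).re /
      (((Adᴴ * Ad * S).trace).re * ((Aᴴ * A * S).trace).re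
        - ‖(Adᴴ * A * S).trace‖ ^ 2))

/-!
Write `a = tr(AᴴAS)`, `d = tr(ȦᴴȦS)`, `r = tr(ȦᴴAS)` and `c = 1 / Γ_{S,1}`, so that
`CRB(S) = c Γ_S · a / (d a - |r|²)`. For `a > 0`, clearing the denominator shows that
"`d a - |r|² > 0` and `CRB(S) ≤ Γ_S`" is equivalent to `|r|² ≤ (d - c) a`, the positivity of the
denominator being forced by `c a > 0`. For Hermitian `S` the traces `a` and `d` are real, and
`|r|² ≤ (d - c) a` with `a > 0` is the Schur-complement criterion for the Hermitian matrix
`[[d - c, r̄], [r, a]]` to be positive semidefinite. That matrix depends affinely on `S`, so the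
feasible set is the intersection of the PSD cone, an open half-space and the preimage of the PSD
cone under an affine map, hence convex.
-/

lemma Matrix.IsHermitian.ofReal_re_trace_mul {n : Type*} [Fintype n] {B S : Matrix n n ℂ}
    (hB : B.IsHermitian) (hS : S.IsHermitian) : (((B * S).trace.re : ℝ) : ℂ) = (B * S).trace := by
  rw [← Complex.conj_eq_iff_re, ← Complex.star_def, ← trace_conjTranspose, conjTranspose_mul,
    hB.eq, hS.eq, trace_mul_comm]

lemma Matrix.posSemidef_fin_two_iff {p q : ℝ} {b : ℂ} (hq : 0 < q) :
    (!![(p : ℂ), star b; b, (q : ℂ)]).PosSemidef ↔ ‖b‖ ^ 2 ≤ p * q := by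
  let Q (x y : ℂ) : ℝ :=
    p * Complex.normSq x + q * Complex.normSq y + 2 * (b * x * star y).re
  have quad (x : Fin 2 → ℂ) :
      star x ⬝ᵥ (!![(p : ℂ), star b; b, (q : ℂ)] *ᵥ x) = (Q (x 0) (x 1) : ℂ) := by
    apply Complex.ext <;>
      simp only [Q, dotProduct, mulVec, Fin.sum_univ_two, of_apply, cons_val', cons_val_fin_one,
        cons_val_zero, cons_val_one, Pi.star_apply, Complex.star_def, Complex.add_re,
        Complex.add_im, Complex.mul_re, Complex.mul_im, Complex.conj_re, Complex.conj_im,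
        Complex.ofReal_re, Complex.ofReal_im, Complex.normSq_apply] <;>
      ring
  have complete_square (x y : ℂ) :
      q * Q x y = Complex.normSq (q * y + b * x) + (p * q - ‖b‖ ^ 2) * Complex.normSq x := by
    simp only [Q, Complex.sq_norm, Complex.normSq_apply, Complex.mul_re, Complex.mul_im,
      Complex.add_re, Complex.add_im, Complex.ofReal_re, Complex.ofReal_im, Complex.star_def,
      Complex.conj_re, Complex.conj_im]
    ring
  rw [posSemidef_iff_dotProduct_mulVec]
  constructor
  · rintro ⟨-, h⟩
    have hQ : 0 ≤ Q q (-b) := by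
      have := h ![(q : ℂ), -b]
      rwa [quad, Complex.zero_le_real] at this
    have hsq := complete_square q (-b)
    rw [show (q : ℂ) * -b + b * q = 0 by ring, Complex.normSq_zero, Complex.normSq_ofReal] at hsq
    nlinarith [mul_pos hq hq]
  · intro h
    refine ⟨?_, fun x => ?_⟩
    · ext i j
      fin_cases i <;> fin_cases j <;> simp
    · rw [quad, Complex.zero_le_real]
      refine nonneg_of_mul_nonneg_right ?_ hq
      rw [complete_square]
      exact add_nonneg (Complex.normSq_nonneg _)
        (mul_nonneg (sub_nonneg.2 h) (Complex.normSq_nonneg _))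

lemma convex_setOf_posSemidef_comp {n E : Type*} [Fintype n] [AddCommGroup E] [Module ℝ E]
    {f : E → Matrix n n ℂ}
    (hf : ∀ x y (a b : ℝ), a + b = 1 → f (a • x + b • y) = a • f x + b • f y) :
    Convex ℝ {x | (f x).PosSemidef} := by
  intro x hx y hy a b ha hb hab
  rw [Set.mem_ofPred_eq, hf x y a b hab]
  exact (hx.smul ha).add (hy.smul hb)

lemma isLinearMap_re_trace_mul {n : Type*} [Fintype n] (B : Matrix n n ℂ) :
    IsLinearMap ℝ fun S : Matrix n n ℂ => (B * S).trace.re where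
  map_add S T := by simp only [Matrix.mul_add, trace_add, Complex.add_re]
  map_smul t S := by simp only [Matrix.mul_smul, trace_smul, Complex.smul_re]

lemma pos_and_mul_div_le_iff {a d r k Γ : ℝ} (hk : 0 < k) (hΓ : 0 < Γ) (ha : 0 < a) :
    (0 < d * a - r ∧ k * (a / (d * a - r)) ≤ Γ) ↔ r ≤ (d - k / Γ) * a := by
  have key {D : ℝ} (hD : 0 < D) : k * (a / D) ≤ Γ ↔ k / Γ * a ≤ D := by
    rw [← mul_div_assoc, div_le_iff₀ hD, div_mul_eq_mul_div, div_le_iff₀ hΓ, mul_comm D]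
  have hka : 0 < k / Γ * a := by positivity
  constructor
  · rintro ⟨hD, h⟩
    linarith [(key hD).1 h]
  · intro h
    have hD : 0 < d * a - r := by linarith
    exact ⟨hD, (key hD).2 (by linarith)⟩

section CRB

variable {NS M : ℕ} (A Ad : Matrix (Fin NS) (Fin M) ℂ)

lemma CRB_le_iff {σS2 : ℝ} (hσ : 0 < σS2) {α : ℂ} (hα : α ≠ 0) {L : ℕ} (hL : 0 < L)
    {ΓS : ℝ} (hΓS : 0 < ΓS) {S : Matrix (Fin M) (Fin M) ℂ} (ha : 0 < (Aᴴ * A * S).trace.re) :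
    (0 < (Adᴴ * Ad * S).trace.re * (Aᴴ * A * S).trace.re - ‖(Adᴴ * A * S).trace‖ ^ 2 ∧
        CRB A Ad σS2 α L S ≤ ΓS) ↔
      ‖(Adᴴ * A * S).trace‖ ^ 2 ≤
        ((Adᴴ * Ad * S).trace.re - 1 / (2 * ‖α‖ ^ 2 * L * ΓS / σS2)) * (Aᴴ * A * S).trace.re := by
  have : 0 < ‖α‖ := norm_pos_iff.2 hα
  have : (0 : ℝ) < L := Nat.cast_pos.2 hL
  rw [one_div_div, ← div_div]
  exact pos_and_mul_div_le_iff (by positivity) hΓS ha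

/-- The matrix of the LMI (9); `c` plays the role of `1 / Γ_{S,1}`. -/
def crbLMI (c : ℝ) (S : Matrix (Fin M) (Fin M) ℂ) : Matrix (Fin 2) (Fin 2) ℂ :=
  !![(Adᴴ * Ad * S).trace - (c : ℂ), star (Adᴴ * A * S).trace;
    (Adᴴ * A * S).trace, (Aᴴ * A * S).trace]

lemma crbLMI_posSemidef_iff (c : ℝ) {S : Matrix (Fin M) (Fin M) ℂ} (hS : S.IsHermitian)
    (ha : 0 < (Aᴴ * A * S).trace.re) :
    (crbLMI A Ad c S).PosSemidef ↔
      ‖(Adᴴ * A * S).trace‖ ^ 2 ≤ ((Adᴴ * Ad * S).trace.re - c) * (Aᴴ * A * S).trace.re := by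
  rw [crbLMI, ← (isHermitian_conjTranspose_mul_self Ad).ofReal_re_trace_mul hS,
    ← (isHermitian_conjTranspose_mul_self A).ofReal_re_trace_mul hS, ← Complex.ofReal_sub]
  exact posSemidef_fin_two_iff ha

lemma crbLMI_smul_add_smul (c : ℝ) (S T : Matrix (Fin M) (Fin M) ℂ) {a b : ℝ} (hab : a + b = 1) :
    crbLMI A Ad c (a • S + b • T) = a • crbLMI A Ad c S + b • crbLMI A Ad c T := by
  have hab' : (a : ℂ) + b = 1 := by exact_mod_cast hab
  ext i j
  fin_cases i <;> fin_cases j <;> simp [crbLMI, Matrix.mul_add, trace_add, trace_smul]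
  linear_combination (c : ℂ) * hab'

def crbFeasibleSet (σS2 : ℝ) (α : ℂ) (L : ℕ) (ΓS : ℝ) : Set (Matrix (Fin M) (Fin M) ℂ) :=
  {S | S.PosSemidef ∧ 0 < (Aᴴ * A * S).trace.re ∧
    0 < (Adᴴ * Ad * S).trace.re * (Aᴴ * A * S).trace.re - ‖(Adᴴ * A * S).trace‖ ^ 2 ∧
    CRB A Ad σS2 α L S ≤ ΓS}

def lmiFeasibleSet (c : ℝ) : Set (Matrix (Fin M) (Fin M) ℂ) :=
  {S | S.PosSemidef ∧ 0 < (Aᴴ * A * S).trace.re ∧ (crbLMI A Ad c S).PosSemidef}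

lemma crbFeasibleSet_eq_lmiFeasibleSet {σS2 : ℝ} (hσ : 0 < σS2) {α : ℂ} (hα : α ≠ 0) {L : ℕ}
    (hL : 0 < L) {ΓS : ℝ} (hΓS : 0 < ΓS) :
    crbFeasibleSet A Ad σS2 α L ΓS = lmiFeasibleSet A Ad (1 / (2 * ‖α‖ ^ 2 * L * ΓS / σS2)) :=
  Set.ext fun _ => and_congr_right fun hS => and_congr_right fun ha =>
    (CRB_le_iff A Ad hσ hα hL hΓS ha).trans (crbLMI_posSemidef_iff A Ad _ hS.isHermitian ha).symm

lemma convex_lmiFeasibleSet (c : ℝ) : Convex ℝ (lmiFeasibleSet A Ad c) :=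
  (convex_setOf_posSemidef_comp (f := id) fun _ _ _ _ _ => rfl).inter <|
    (convex_halfSpace_gt (isLinearMap_re_trace_mul _) 0).inter <|
      convex_setOf_posSemidef_comp fun S T _ _ => crbLMI_smul_add_smul A Ad c S T

end CRB

/-- the set of Hermitian PSD `S` with `tr(AᴴAS) > 0`, positive CRB denominator,
and `CRB(S) ≤ Γ_S` is convex, and coincides with the set of Hermitian PSD `S` with
`tr(AᴴAS) > 0` satisfying the Schur-complement LMI with `Γ_{S,1} = 2|α|²L·Γ_S/σ_S²`. -/
theorem stmt_8 {NS M : ℕ} (A Ad : Matrix (Fin NS) (Fin M) ℂ) (σS2 : ℝ) (hσ : 0 < σS2)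
    (α : ℂ) (hα : α ≠ 0) (L : ℕ) (hL : 0 < L) (ΓS : ℝ) (hΓS : 0 < ΓS) :
    Convex ℝ {S : Matrix (Fin M) (Fin M) ℂ | S.PosSemidef ∧
        0 < ((Aᴴ * A * S).trace).re ∧
        0 < ((Adᴴ * Ad * S).trace).re * ((Aᴴ * A * S).trace).re
              - ‖(Adᴴ * A * S).trace‖ ^ 2 ∧
        CRB A Ad σS2 α L S ≤ ΓS} ∧
    {S : Matrix (Fin M) (Fin M) ℂ | S.PosSemidef ∧
        0 < ((Aᴴ * A * S).trace).re ∧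
        0 < ((Adᴴ * Ad * S).trace).re * ((Aᴴ * A * S).trace).re
              - ‖(Adᴴ * A * S).trace‖ ^ 2 ∧
        CRB A Ad σS2 α L S ≤ ΓS} =
      {S : Matrix (Fin M) (Fin M) ℂ | S.PosSemidef ∧
        0 < ((Aᴴ * A * S).trace).re ∧
        (!![((Adᴴ * Ad * S).trace
              - ((1 / (2 * ‖α‖ ^ 2 * L * ΓS / σS2) : ℝ) : ℂ)),
            star ((Adᴴ * A * S).trace);
            (Adᴴ * A * S).trace, (Aᴴ * A * S).trace] :
          Matrix (Fin 2) (Fin 2) ℂ).PosSemidef} := by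
  have hfeasible := crbFeasibleSet_eq_lmiFeasibleSet A Ad hσ hα hL hΓS
  exact ⟨(hfeasible ▸ convex_lmiFeasibleSet A Ad _ :), hfeasible⟩
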